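/- arXiv:2404.16217 — 3 statements merged into one kernel-verified Lean document; each statement's English description precedes it below -/
import Mathlib

section
/- Suppose that for every directed graph G with source s and every vertex v there is a (λ,k)-FT-BFP of G in which v has at most c in-edges and which differs from G only at in-edges of v. Then every n-vertex directed graph with source s admits a (λ,k)-FT-BFP with at most c·n edges. -/
open Finset

/-- `p` is a nonempty directed path/walk (as a list of edges) from `s` to `t`
using only edges of `G`. -/
def IsPath {V : Type*} (G : Finset (V × V)) (s t : V) (p : List (V × V)) : Prop :=
  p ≠ [] ∧ (∀ e ∈ p, e ∈ G) ∧ List.Chain' (fun e f => e.2 = f.1) p ∧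
    p.head?.map Prod.fst = some s ∧ p.getLast?.map Prod.snd = some t

/-- `G` contains `r` pairwise edge-disjoint paths from `s` to `t` (unit capacities). -/
def EDP {V : Type*} (G : Finset (V × V)) (s t : V) (r : ℕ) : Prop :=
  ∃ ps : Fin r → List (V × V), (∀ i, IsPath G s t (ps i)) ∧
    ∀ i j, i ≠ j → ∀ e, e ∈ ps i → e ∉ ps j

/-- Max-flow with unit capacities: the maximum number of edge-disjoint `s`-`t` paths. -/
noncomputable def maxFlow {V : Type*} (G : Finset (V × V)) (s t : V) : ℕ :=
  sSup {r | EDP G s t r}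

/-- Directed reachability in the edge set `G`. -/
def Reach {V : Type*} (G : Finset (V × V)) (s t : V) : Prop :=
  Relation.ReflTransGen (fun a b => (a, b) ∈ G) s t

def inEdges {V : Type*} [DecidableEq V] (G : Finset (V × V)) (v : V) : Finset (V × V) :=
  G.filter fun e => e.2 = v

def outDeg {V : Type*} [DecidableEq V] (G : Finset (V × V)) (v : V) : ℕ :=
  (G.filter fun e => e.1 = v).card

/-- `H` is a `(lam, k)` fault-tolerant bounded-flow-preserver of `G` w.r.t. source `s`:
for every set `F` of at most `k` failed edges and every vertex `t`, the `s`-`t` max-flow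
of `H \ F` equals that of `G \ F` whenever the latter is at most `lam`, and is at least
`lam` otherwise. -/
def IsFTBFP {V : Type*} [DecidableEq V] (G H : Finset (V × V)) (s : V) (lam k : ℕ) : Prop :=
  H ⊆ G ∧ ∀ F : Finset (V × V), F.card ≤ k → ∀ t : V,
    (maxFlow (G \ F) s t ≤ lam → maxFlow (H \ F) s t = maxFlow (G \ F) s t) ∧
    (lam < maxFlow (G \ F) s t → lam ≤ maxFlow (H \ F) s t)

/-- `H` is a `j`-fault-tolerant reachability subgraph of `G` w.r.t. source `s`. -/
def IsFTRS {V : Type*} [DecidableEq V] (G H : Finset (V × V)) (s : V) (j : ℕ) : Prop :=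
  H ⊆ G ∧ ∀ F : Finset (V × V), F.card ≤ j → ∀ t : V,
    (Reach (H \ F) s t ↔ Reach (G \ F) s t)

def IsCut {V : Type*} (A : Finset V) (s t : V) : Prop := s ∈ A ∧ t ∉ A

/-- Number of edges of `G` from `A` to its complement. -/
def cutVal {V : Type*} [DecidableEq V] (G : Finset (V × V)) (A : Finset V) : ℕ :=
  (G.filter fun e => e.1 ∈ A ∧ e.2 ∉ A).card

def IsMinCut {V : Type*} [DecidableEq V] (G : Finset (V × V)) (s t : V) (A : Finset V) : Prop :=
  IsCut A s t ∧ ∀ B : Finset V, IsCut B s t → cutVal G A ≤ cutVal G B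

def IsCutS {V : Type*} (S : Finset V) (t : V) (A : Finset V) : Prop := S ⊆ A ∧ t ∉ A

def IsMinCutS {V : Type*} [DecidableEq V] (G : Finset (V × V)) (S : Finset V) (t : V)
    (A : Finset V) : Prop :=
  IsCutS S t A ∧ ∀ B : Finset V, IsCutS S t B → cutVal G A ≤ cutVal G B

/-- Farthest min-cut: the min-cut whose source side contains the source side of
every min-cut. -/
def IsFMC {V : Type*} [DecidableEq V] (G : Finset (V × V)) (S : Finset V) (t : V)
    (A : Finset V) : Prop :=
  IsMinCutS G S t A ∧ ∀ B : Finset V, IsMinCutS G S t B → B ⊆ A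

/-- Vertices outside `A` with an in-edge from `A`. -/
def outSet {V : Type*} [DecidableEq V] (G : Finset (V × V)) (A : Finset V) : Finset V :=
  (G.filter fun e => e.1 ∈ A ∧ e.2 ∉ A).image Prod.snd

/-- Locality Lemma: if for every graph `G` and vertex `v` there is a
`(lam,k)`-FT-BFP of `G` that differs from `G` only at in-edges of `v` and in which `v`
has at most `c` in-edges, then every graph has a `(lam,k)`-FT-BFP with at most
`c * n` edges, where `n` is the number of vertices. -/
theorem stmt_1 {V : Type*} [Fintype V] [DecidableEq V] (s : V) (lam k c : ℕ)
    (hA : ∀ G : Finset (V × V), ∀ v : V, ∃ H : Finset (V × V),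
      IsFTBFP G H s lam k ∧ (inEdges H v).card ≤ c ∧ ∀ e ∈ G, e.2 ≠ v → e ∈ H) :
    ∀ G : Finset (V × V), ∃ H : Finset (V × V),
      IsFTBFP G H s lam k ∧ H.card ≤ c * Fintype.card V := by
  have trans : ∀ G H H' : Finset (V × V), IsFTBFP G H s lam k → IsFTBFP H H' s lam k →
      IsFTBFP G H' s lam k := by
    rintro G H H' ⟨hGH, h1⟩ ⟨hHH', h2⟩
    refine ⟨hHH'.trans hGH, fun F hF t => ?_⟩
    obtain ⟨h1a, h1b⟩ := h1 F hF t
    obtain ⟨h2a, h2b⟩ := h2 F hF t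
    constructor
    · intro hle
      have e1 := h1a hle
      exact (h2a (e1.le.trans hle)).trans e1
    · intro hlt
      have := h1b hlt
      rcases le_or_gt (maxFlow (H \ F) s t) lam with h | h
      · have heq := h2a h
        omega
      · exact h2b h
  have key : ∀ (l : List V) (G : Finset (V × V)), ∃ H : Finset (V × V),
      IsFTBFP G H s lam k ∧ ∀ v ∈ l, (inEdges H v).card ≤ c := by
    intro l
    induction l with
    | nil =>
      intro G
      refine ⟨G, ⟨subset_rfl, fun F _ t => ⟨fun _ => rfl, fun h => h.le⟩⟩, by simp⟩
    | cons v l ih =>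
      intro G
      obtain ⟨H, hH, hcard, _⟩ := hA G v
      obtain ⟨H', hH', hl⟩ := ih H
      refine ⟨H', trans G H H' hH hH', ?_⟩
      intro w hw
      rcases List.mem_cons.mp hw with rfl | hw
      · refine le_trans (Finset.card_le_card ?_) hcard
        intro e he
        simp only [inEdges, Finset.mem_filter] at he ⊢
        exact ⟨hH'.1 he.1, he.2⟩
      · exact hl w hw
  intro G
  obtain ⟨H, hH, hl⟩ := key Finset.univ.toList G
  refine ⟨H, hH, ?_⟩
  have hcard : H.card = ∑ v ∈ Finset.univ, (inEdges H v).card := by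
    apply Finset.card_eq_sum_card_fiberwise (f := Prod.snd)
    intro x _; exact Finset.mem_univ _
  rw [hcard]
  calc ∑ v ∈ Finset.univ, (inEdges H v).card ≤ ∑ _v ∈ (Finset.univ : Finset V), c :=
        Finset.sum_le_sum (fun v _ => hl v (Finset.mem_toList.mpr (Finset.mem_univ v)))
    _ = c * Fintype.card V := by rw [Finset.sum_const, smul_eq_mul, Fintype.card, mul_comm]
end

section
/- Let G be a directed graph with source s and a vertex t with maxflow(s,t,G) ≥ λ+k. Let H be the subgraph obtained from G by restricting the in-edges of t to the λ+k in-edges used by some fixed collection of λ+k edge-disjoint s-to-t paths, keeping all other edges. Then H is a (λ,k)-FT-BFP of G, and t has in-degree λ+k in H. -/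
open Finset

/-!
Fix `F` with `#F ≤ k`, a vertex `v` and a vertex set `A ∋ s`. Every `s`-`v` path leaves `A`
through an edge starting in `A` and ending outside `A` or at `v`. If `t ∉ A` or `v = t`, the
`lam + k` given paths to `t` supply `lam + k` distinct such edges of `H`, at most `k` of which lie
in `F`. If `t ∈ A` and `v ≠ t`, such edges on the paths of `G \ F` to `v` do not enter `t`, so
they lie in `H \ F`. Hence every such cut of `H \ F` has at least
`min lam (maxFlow (G \ F) s v)` edges, and Menger's theorem bounds `maxFlow (H \ F) s v` below.

Menger's theorem is proved from a maximum flow `E`: if `v` is reachable from `s` in the residual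
graph of `E`, an augmenting path yields a larger flow; otherwise the reachable set is a cut
crossed only by edges of `E`, all outgoing, so its size is the value of `E`. Cuts that may end
at `v` become ordinary cuts once the edges entering `v` are redirected to a new sink.

The given paths never leave `t`, so each enters `t` only by its last edge; these last edges are
the in-edges of `t` in `H`.
-/

section Paths

variable {V : Type*}

theorem isPath_cons_iff {K : Finset (V × V)} {a b : V} {e : V × V} {q : List (V × V)} :
    IsPath K a b (e :: q) ↔ e ∈ K ∧ e.1 = a ∧ (q = [] ∧ e.2 = b ∨ IsPath K e.2 b q) := by
  cases q with
  | nil => simp [IsPath, List.Chain']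
  | cons f q =>
    simp only [IsPath, List.Chain', List.isChain_cons_cons, List.mem_cons, forall_eq_or_imp,
      List.head?_cons, List.getLast?_cons_cons, Option.map_some, Option.some.injEq]
    grind

theorem IsPath.mono {K K' : Finset (V × V)} (h : K ⊆ K') {a b : V} {p : List (V × V)}
    (hp : IsPath K a b p) : IsPath K' a b p :=
  ⟨hp.1, fun e he => h (hp.2.1 e he), hp.2.2⟩

theorem edp_zero (K : Finset (V × V)) (a b : V) : EDP K a b 0 :=
  ⟨Fin.elim0, fun i => i.elim0, fun i => i.elim0⟩

theorem EDP.mono {K K' : Finset (V × V)} (h : K ⊆ K') {a b : V} {r : ℕ} (hK : EDP K a b r) :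
    EDP K' a b r :=
  let ⟨ps, hps, hdisj⟩ := hK
  ⟨ps, fun i => (hps i).mono h, hdisj⟩

theorem EDP.le_card {K T : Finset (V × V)} {a b : V} {r : ℕ} (h : EDP K a b r)
    (hT : ∀ p, IsPath K a b p → ∃ e ∈ p, e ∈ T) : r ≤ #T := by
  obtain ⟨ps, hps, hdisj⟩ := h
  choose e he heT using fun i => hT (ps i) (hps i)
  simpa using card_le_card_of_injOn (s := univ) e (fun i _ => heT i)
    fun i _ j _ hij => by_contra fun hne => hdisj i j hne _ (he i) (hij ▸ he j)

theorem bddAbove_edp (K : Finset (V × V)) (a b : V) : BddAbove {r | EDP K a b r} :=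
  ⟨#K, fun _ h => h.le_card fun p hp => ⟨p.head hp.1, List.head_mem _, hp.2.1 _ (List.head_mem _)⟩⟩

theorem edp_maxFlow (K : Finset (V × V)) (a b : V) : EDP K a b (maxFlow K a b) :=
  Nat.sSup_mem ⟨0, edp_zero K a b⟩ (bddAbove_edp K a b)

theorem EDP.le_maxFlow {K : Finset (V × V)} {a b : V} {r : ℕ} (h : EDP K a b r) :
    r ≤ maxFlow K a b :=
  le_csSup (bddAbove_edp K a b) h

theorem maxFlow_mono {K K' : Finset (V × V)} (h : K ⊆ K') (a b : V) :
    maxFlow K a b ≤ maxFlow K' a b :=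
  ((edp_maxFlow K a b).mono h).le_maxFlow

end Paths

section NetOut

variable {V : Type*} [DecidableEq V]

def netOutArc (a b : V) : V → ℤ := Pi.single a 1 - Pi.single b 1

def netOut (E : Finset (V × V)) : V → ℤ := ∑ e ∈ E, netOutArc e.1 e.2

theorem netOutArc_apply (a b w : V) :
    netOutArc a b w = (if w = a then 1 else 0) - (if w = b then 1 else 0) := by
  simp [netOutArc, Pi.single_apply]

theorem netOut_apply (E : Finset (V × V)) (w : V) :
    netOut E w = ∑ e ∈ E, netOutArc e.1 e.2 w :=
  Finset.sum_apply w E _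

theorem netOut_insert {E : Finset (V × V)} {e : V × V} (h : e ∉ E) :
    netOut (insert e E) = netOutArc e.1 e.2 + netOut E :=
  sum_insert h

theorem netOut_union {E E' : Finset (V × V)} (h : Disjoint E E') :
    netOut (E ∪ E') = netOut E + netOut E' :=
  sum_union h

theorem netOut_sdiff {E E' : Finset (V × V)} (h : E' ⊆ E) :
    netOut (E \ E') = netOut E - netOut E' :=
  eq_sub_of_add_eq (sum_sdiff h)

theorem netOut_erase {E : Finset (V × V)} {e : V × V} (h : e ∈ E) :
    netOut (E.erase e) = netOut E - netOutArc e.1 e.2 :=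
  sum_erase_eq_sub h

theorem exists_mem_of_netOut_pos {E : Finset (V × V)} {x : V} (h : 0 < netOut E x) :
    ∃ y, (x, y) ∈ E := by
  by_contra! hx
  refine h.not_ge (netOut_apply E x ▸ sum_nonpos fun e he => ?_)
  have : e.1 ≠ x := fun h1 => hx e.2 (h1 ▸ he)
  simp only [netOutArc_apply, if_neg this.symm]
  split_ifs <;> simp

theorem sum_netOut (E : Finset (V × V)) (A : Finset V) :
    ∑ w ∈ A, netOut E w =
      (#{e ∈ E | e.1 ∈ A ∧ e.2 ∉ A} : ℤ) - #{e ∈ E | e.1 ∉ A ∧ e.2 ∈ A} := by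
  simp only [netOut_apply, netOutArc_apply]
  rw [sum_comm, card_filter, card_filter]
  push_cast
  rw [← sum_sub_distrib]
  refine sum_congr rfl fun e _ => ?_
  simp only [sum_sub_distrib, sum_ite_eq']
  split_ifs <;> simp_all

theorem netOut_toFinset {K : Finset (V × V)} :
    ∀ {p : List (V × V)} {a b : V}, IsPath K a b p → p.Nodup →
      netOut p.toFinset = netOutArc a b
  | [], _, _, hp, _ => absurd rfl hp.1
  | e :: q, a, b, hp, hnd => by
    obtain ⟨-, rfl, ⟨rfl, rfl⟩ | hq⟩ := isPath_cons_iff.1 hp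
    · simp [netOut]
    · rw [List.nodup_cons] at hnd
      rw [List.toFinset_cons, netOut_insert (by simpa using hnd.1), netOut_toFinset hq hnd.2]
      simp only [netOutArc]
      abel

end NetOut

section Decomposition

variable {V : Type*} [DecidableEq V]

theorem exists_trail_of_netOut_pos (E : Finset (V × V)) (x : V) (hx : 0 < netOut E x) :
    ∃ z p, IsPath E x z p ∧ p.Nodup ∧ netOut E z < 0 := by
  induction E using Finset.strongInduction generalizing x with
  | H E ih =>
    obtain ⟨y, hy⟩ := exists_mem_of_netOut_pos hx
    by_cases hyneg : netOut E y < 0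
    · exact ⟨y, [(x, y)], isPath_cons_iff.2 ⟨hy, rfl, .inl ⟨rfl, rfl⟩⟩,
        List.nodup_singleton _, hyneg⟩
    have hE' : ∀ w, netOut (E.erase (x, y)) w = netOut E w - netOutArc x y w := fun w => by
      rw [netOut_erase hy, Pi.sub_apply]
    obtain ⟨z, p, hp, hnd, hz⟩ := ih _ (erase_ssubset hy) y (by
      rw [hE', netOutArc_apply]; split_ifs <;> grind)
    refine ⟨z, (x, y) :: p, isPath_cons_iff.2 ⟨hy, rfl, .inr (hp.mono (erase_subset _ _))⟩,
      List.nodup_cons.2 ⟨fun h => notMem_erase _ _ (hp.2.1 _ h), hnd⟩, ?_⟩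
    rw [hE', netOutArc_apply] at hz
    split_ifs at hz <;> grind

theorem EDP.cons {K : Finset (V × V)} {a b : V} {r : ℕ} {p : List (V × V)}
    (hp : IsPath K a b p) (h : EDP (K \ p.toFinset) a b r) : EDP K a b (r + 1) := by
  obtain ⟨qs, hqs, hdisj⟩ := h
  have hq : ∀ i, ∀ e ∈ qs i, e ∉ p := fun i e he =>
    (mem_sdiff.1 ((hqs i).2.1 e he)).2 ∘ List.mem_toFinset.2
  refine ⟨Fin.cons p qs, Fin.cases hp fun i => (hqs i).mono sdiff_subset, ?_⟩
  intro i j hij e hei hej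
  cases i using Fin.cases <;> cases j using Fin.cases
  · exact hij rfl
  · exact hq _ e hej hei
  · exact hq _ e hei hej
  · exact hdisj _ _ (fun h => hij (congrArg _ h)) e hei hej

theorem edp_of_netOut_eq {s v : V} (hsv : s ≠ v) {r : ℕ} {E : Finset (V × V)}
    (h : netOut E = r • netOutArc s v) : EDP E s v r := by
  induction r generalizing E with
  | zero => exact edp_zero E s v
  | succ r ih =>
    have hs : 0 < netOut E s := by
      rw [h]; simp [netOutArc_apply, hsv]
    obtain ⟨z, p, hp, hnd, hz⟩ := exists_trail_of_netOut_pos E s hs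
    obtain rfl : z = v := by
      by_contra hzv; rw [h] at hz; simp [netOutArc_apply, hzv] at hz; split_ifs at hz <;> omega
    refine EDP.cons hp (ih ?_)
    rw [netOut_sdiff fun e he => hp.2.1 e (List.mem_toFinset.1 he), h, netOut_toFinset hp hnd,
      succ_nsmul, add_sub_cancel_right]

end Decomposition

theorem exists_nodup_isChain_of_reflTransGen {α : Type*} {r : α → α → Prop} {a b : α}
    (h : Relation.ReflTransGen r a b) :
    ∃ l, (a :: l).IsChain r ∧ (a :: l).Nodup ∧ (a :: l).getLast? = some b := by
  induction h using Relation.ReflTransGen.head_induction_on with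
  | refl => exact ⟨[], .singleton _, List.nodup_singleton _, rfl⟩
  | @head a c hac _ ih =>
    obtain ⟨l, hch, hnd, hlast⟩ := ih
    by_cases ha : a ∈ c :: l
    · obtain ⟨l₁, l₂, hl⟩ := List.append_of_mem ha
      have hsuf : a :: l₂ <:+ c :: l := hl ▸ List.suffix_append _ _
      refine ⟨l₂, hch.suffix hsuf, hnd.sublist hsuf.sublist, ?_⟩
      rw [← hlast, hl]
      simp [List.getLast?_append, List.getLast?_cons]
    · exact ⟨c :: l, hch.cons_cons hac, List.nodup_cons.2 ⟨ha, hnd⟩, by simpa using hlast⟩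

section Menger

variable {V : Type*} [DecidableEq V]

/-- A unit-capacity flow of value `r` from `s` to `v` in `K`, given by its support `E`. -/
def IsFlow (K : Finset (V × V)) (s v : V) (r : ℕ) (E : Finset (V × V)) : Prop :=
  E ⊆ K ∧ netOut E = r • netOutArc s v

def residualAdj (K E : Finset (V × V)) (x y : V) : Prop :=
  (x, y) ∈ K ∧ (x, y) ∉ E ∨ (y, x) ∈ E

theorem IsFlow.le_maxFlow {K E : Finset (V × V)} {s v : V} {r : ℕ} (hsv : s ≠ v)
    (h : IsFlow K s v r E) : r ≤ maxFlow K s v :=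
  ((edp_of_netOut_eq hsv h.2).mono h.1).le_maxFlow

/-- The chain is `Nodup`, so the endpoint conditions keep every inserted edge fresh. -/
theorem exists_augmentation {K E : Finset (V × V)} :
    ∀ {a z : V} {l : List V}, (a :: l).IsChain (residualAdj K E) → (a :: l).Nodup →
      (a :: l).getLast? = some z →
      ∃ Fwd Bwd : Finset (V × V), Fwd ⊆ K \ E ∧ Bwd ⊆ E ∧
        (∀ e ∈ Fwd, e.1 ∈ a :: l) ∧ (∀ e ∈ Bwd, e.2 ∈ a :: l) ∧
        netOut Fwd - netOut Bwd = netOutArc a z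
  | a, z, [], _, _, hz => by
    obtain rfl : a = z := by simpa using hz
    exact ⟨∅, ∅, empty_subset _, empty_subset _, by simp, by simp, by simp [netOut, netOutArc]⟩
  | a, z, b :: l, hch, hnd, hz => by
    rw [List.isChain_cons_cons] at hch
    rw [List.nodup_cons] at hnd
    obtain ⟨Fwd, Bwd, hF, hB, hFl, hBl, heq⟩ :=
      exists_augmentation hch.2 hnd.2 (by simpa using hz)
    rcases hch.1 with hab | hba
    · have hfresh : (a, b) ∉ Fwd := fun h => hnd.1 (hFl _ h)
      refine ⟨insert (a, b) Fwd, Bwd, insert_subset (mem_sdiff.2 hab) hF, hB, ?_,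
        fun e he => List.mem_cons_of_mem _ (hBl e he), ?_⟩
      · exact (forall_mem_insert _ _ _).2
          ⟨List.mem_cons_self, fun e he => List.mem_cons_of_mem _ (hFl e he)⟩
      rw [netOut_insert hfresh, add_sub_assoc, heq]
      simp only [netOutArc]
      abel
    · have hfresh : (b, a) ∉ Bwd := fun h => hnd.1 (hBl _ h)
      refine ⟨Fwd, insert (b, a) Bwd, hF, insert_subset hba hB,
        fun e he => List.mem_cons_of_mem _ (hFl e he), ?_, ?_⟩
      · exact (forall_mem_insert _ _ _).2
          ⟨List.mem_cons_self, fun e he => List.mem_cons_of_mem _ (hBl e he)⟩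
      rw [netOut_insert hfresh, sub_add_eq_sub_sub_swap, heq]
      simp only [netOutArc]
      abel

theorem IsFlow.exists_succ {K E : Finset (V × V)} {s v : V} {m : ℕ} (h : IsFlow K s v m E)
    (hv : Relation.ReflTransGen (residualAdj K E) s v) : ∃ E', IsFlow K s v (m + 1) E' := by
  obtain ⟨l, hch, hnd, hlast⟩ := exists_nodup_isChain_of_reflTransGen hv
  obtain ⟨Fwd, Bwd, hF, hB, -, -, heq⟩ := exists_augmentation hch hnd hlast
  have hdisj : Disjoint E Fwd := (disjoint_of_subset_left hF sdiff_disjoint).symm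
  refine ⟨(E ∪ Fwd) \ Bwd, sdiff_subset.trans (union_subset h.1 (hF.trans sdiff_subset)), ?_⟩
  rw [netOut_sdiff (hB.trans subset_union_left), netOut_union hdisj, h.2, add_sub_assoc, heq,
    succ_nsmul]

theorem IsFlow.cutVal_le {K E : Finset (V × V)} {s v : V} {m : ℕ} {R : Finset V}
    (h : IsFlow K s v m E) (hs : s ∈ R) (hv : v ∉ R)
    (hR : ∀ x y, x ∈ R → residualAdj K E x y → y ∈ R) : cutVal K R ≤ m := by
  have hin : #{e ∈ E | e.1 ∉ R ∧ e.2 ∈ R} = 0 :=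
    card_eq_zero.2 (filter_eq_empty_iff.2 fun e he hR' => hR'.1 (hR _ _ hR'.2 (.inr he)))
  have hsum : ∑ w ∈ R, netOut E w = m := by
    simp [h.2, netOutArc_apply, ← mul_sum, sum_sub_distrib, hs, hv]
  have hout : #{e ∈ E | e.1 ∈ R ∧ e.2 ∉ R} = m := by
    have := sum_netOut E R
    omega
  refine hout ▸ card_le_card fun e he => ?_
  rw [mem_filter] at he ⊢
  by_contra heE
  exact he.2.2 (hR _ _ he.2.1 (.inl ⟨he.1, fun h => heE ⟨h, he.2⟩⟩))

theorem exists_cut_le_maxFlow [Fintype V] (K : Finset (V × V)) {s v : V} (hsv : s ≠ v) :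
    ∃ A : Finset V, s ∈ A ∧ v ∉ A ∧ cutVal K A ≤ maxFlow K s v := by
  classical
  set flows := {r | ∃ E, IsFlow K s v r E}
  have hbdd : BddAbove flows :=
    ⟨maxFlow K s v, by rintro _ ⟨_, hE⟩; exact hE.le_maxFlow hsv⟩
  obtain ⟨E, hE⟩ : sSup flows ∈ flows :=
    Nat.sSup_mem ⟨0, ∅, empty_subset K, by simp [netOut]⟩ hbdd
  set R : Finset V := {w | Relation.ReflTransGen (residualAdj K E) s w}
  have hv : v ∉ R := fun hv => by
    obtain ⟨E', hE'⟩ := hE.exists_succ (by simpa [R] using hv)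
    have := le_csSup hbdd ⟨E', hE'⟩
    omega
  have hs : s ∈ R := mem_filter.2 ⟨mem_univ s, .refl⟩
  refine ⟨R, hs, hv, (hE.cutVal_le hs hv fun x y hx hxy => ?_).trans
    (hE.le_maxFlow hsv)⟩
  simp only [R, mem_filter, mem_univ, true_and] at hx ⊢
  exact hx.tail hxy

end Menger

theorem IsPath.map {α β : Type*} [DecidableEq β] (f : α → β) {K : Finset (α × α)} {a b : α}
    {p : List (α × α)} (hp : IsPath K a b p) :
    IsPath (K.image (Prod.map f f)) (f a) (f b) (p.map (Prod.map f f)) := by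
  obtain ⟨hne, hK, hch, hhd, hlast⟩ := hp
  refine ⟨by simpa using hne, fun e he => ?_, (List.isChain_map _).2 (hch.imp fun e e' h => ?_),
    ?_, ?_⟩
  · obtain ⟨x, hx, rfl⟩ := List.mem_map.1 he
    exact mem_image_of_mem _ (hK x hx)
  · simp [h]
  · rw [List.head?_map, Option.map_map, show Prod.fst ∘ Prod.map f f = f ∘ Prod.fst from rfl,
      ← Option.map_map, hhd, Option.map_some]
  · rw [List.getLast?_map, Option.map_map, show Prod.snd ∘ Prod.map f f = f ∘ Prod.snd from rfl,
      ← Option.map_map, hlast, Option.map_some]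

theorem EDP.map {α β : Type*} [DecidableEq β] (f : α → β) {K : Finset (α × α)} {a b : α}
    {r : ℕ} (h : EDP K a b r) (hf : Set.InjOn (Prod.map f f) K) :
    EDP (K.image (Prod.map f f)) (f a) (f b) r := by
  obtain ⟨ps, hps, hdisj⟩ := h
  refine ⟨fun i => (ps i).map (Prod.map f f), fun i => (hps i).map f, fun i j hij e hei hej => ?_⟩
  obtain ⟨x, hx, rfl⟩ := List.mem_map.1 hei
  obtain ⟨y, hy, hxy⟩ := List.mem_map.1 hej
  exact hdisj i j hij x hx (hf ((hps j).2.1 y hy) ((hps i).2.1 x hx) hxy ▸ hy)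

section SplitSink

variable {V : Type*} [DecidableEq V]

/-- Redirects the edges entering `v` to a fresh sink `none`; this makes `v` distinct from the
source even when `v = s`. -/
def splitSink (v : V) (e : V × V) : Option V × Option V :=
  (some e.1, if e.2 = v then none else some e.2)

theorem prodMap_getD_splitSink (v : V) (e : V × V) :
    Prod.map (Option.getD · v) (Option.getD · v) (splitSink v e) = e := by
  unfold splitSink
  split_ifs with h
  exacts [Prod.ext rfl h.symm, rfl]

theorem maxFlow_image_splitSink_le (K : Finset (V × V)) (s v : V) :
    maxFlow (K.image (splitSink v)) (some s) none ≤ maxFlow K s v := by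
  have hK : (K.image (splitSink v)).image (Prod.map (Option.getD · v) (Option.getD · v)) = K := by
    simp [image_image, Function.comp_def, prodMap_getD_splitSink]
  have hinj :
      Set.InjOn (Prod.map (Option.getD · v) (Option.getD · v)) (K.image (splitSink v) : Set _) := by
    simp only [coe_image, Set.InjOn, Set.mem_image, forall_exists_index, and_imp]
    rintro _ x - rfl _ y - rfl hxy
    rw [prodMap_getD_splitSink, prodMap_getD_splitSink] at hxy
    rw [hxy]
  have := ((edp_maxFlow _ (some s) none).map _ hinj).le_maxFlow
  rwa [hK] at this

theorem le_maxFlow_of_forall_cut [Fintype V] {K : Finset (V × V)} {s v : V} {r : ℕ}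
    (h : ∀ A : Finset V, s ∈ A → r ≤ #{e ∈ K | e.1 ∈ A ∧ (e.2 ∉ A ∨ e.2 = v)}) :
    r ≤ maxFlow K s v := by
  obtain ⟨A', hs, hv, hcut⟩ :=
    exists_cut_le_maxFlow (K.image (splitSink v)) (Option.some_ne_none s)
  have hinj : Function.Injective (splitSink v) :=
    Function.LeftInverse.injective (prodMap_getD_splitSink v)
  let A : Finset V := {x | some x ∈ A'}
  calc r ≤ #{e ∈ K | e.1 ∈ A ∧ (e.2 ∉ A ∨ e.2 = v)} := h A (by simpa [A] using hs)
    _ ≤ cutVal (K.image (splitSink v)) A' := by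
        refine card_le_card_of_injOn _ (fun e he => ?_) hinj.injOn
        simp only [A, coe_filter, mem_filter, mem_univ, true_and, Set.mem_ofPred_eq] at he
        simp only [coe_filter, Set.mem_ofPred_eq, splitSink]
        refine ⟨mem_image_of_mem _ he.1, he.2.1, ?_⟩
        split_ifs with hv' <;> tauto
    _ ≤ maxFlow (K.image (splitSink v)) (some s) none := hcut
    _ ≤ maxFlow K s v := maxFlow_image_splitSink_le K s v

end SplitSink

theorem IsPath.exists_mem_leaving {V : Type*} {K : Finset (V × V)} {A : Finset V} :
    ∀ {a b : V} {p : List (V × V)}, IsPath K a b p → a ∈ A →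
      ∃ e ∈ p, e.1 ∈ A ∧ (e.2 ∉ A ∨ e.2 = b)
  | _, _, [], hp, _ => absurd rfl hp.1
  | _, b, e :: _, hp, ha => by
    obtain ⟨-, rfl, ⟨-, hb⟩ | hq⟩ := isPath_cons_iff.1 hp
    · exact ⟨e, List.mem_cons_self, ha, .inr hb⟩
    by_cases he : e.2 ∉ A ∨ e.2 = b
    · exact ⟨e, List.mem_cons_self, ha, he⟩
    obtain ⟨f, hf, hfA⟩ := IsPath.exists_mem_leaving hq (not_not.1 (not_or.1 he).1)
    exact ⟨f, List.mem_cons_of_mem _ hf, hfA⟩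

theorem eq_getLast_of_snd_notMem {α : Type*} {p : List (α × α)}
    (hp : p.IsChain fun e f => e.2 = f.1) {e : α × α} (he : e ∈ p)
    (hnot : e.2 ∉ p.map Prod.fst) : e = p.getLast (List.ne_nil_of_mem he) := by
  obtain ⟨l₁, l₂, rfl⟩ := List.append_of_mem he
  cases l₂ with
  | nil => simp
  | cons f l₂ =>
    rw [List.isChain_append_cons_cons] at hp
    exact absurd (hp.2.1 ▸ List.mem_map_of_mem (by simp)) hnot

section Preserver

variable {V : Type*} [DecidableEq V]

theorem min_le_maxFlow_sdiff [Fintype V] {G H F : Finset (V × V)} {s t v : V} {lam k : ℕ}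
    (hGH : ∀ e ∈ G, e.2 ≠ t → e ∈ H) (hH : EDP H s t (lam + k)) (hF : #F ≤ k) :
    min lam (maxFlow (G \ F) s v) ≤ maxFlow (H \ F) s v := by
  refine le_maxFlow_of_forall_cut fun A hs => ?_
  by_cases htv : t ∈ A ∧ v ≠ t
  · refine (min_le_right _ _).trans ((edp_maxFlow (G \ F) s v).le_card fun p hp => ?_)
    obtain ⟨e, hep, he⟩ := hp.exists_mem_leaving hs
    obtain ⟨heG, heF⟩ := mem_sdiff.1 (hp.2.1 e hep)
    refine ⟨e, hep, mem_filter.2 ⟨mem_sdiff.2 ⟨hGH e heG fun het => ?_, heF⟩, he⟩⟩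
    grind
  · have hcross : lam + k ≤ #{e ∈ H | e.1 ∈ A ∧ (e.2 ∉ A ∨ e.2 = v)} :=
      hH.le_card fun p hp => by
        obtain ⟨e, hep, he⟩ := hp.exists_mem_leaving hs
        exact ⟨e, hep, mem_filter.2 ⟨hp.2.1 e hep, he.1, by grind⟩⟩
    have hfail : #{e ∈ H | e.1 ∈ A ∧ (e.2 ∉ A ∨ e.2 = v)} ≤
        #{e ∈ H \ F | e.1 ∈ A ∧ (e.2 ∉ A ∨ e.2 = v)} + #F := by
      refine (card_le_card fun e he => ?_).trans (card_union_le _ _)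
      by_cases heF : e ∈ F <;> simp_all
    omega

theorem card_inEdges_filter {G : Finset (V × V)} {s t : V} {n : ℕ} (ps : Fin n → List (V × V))
    (hpath : ∀ i, IsPath G s t (ps i)) (hdisj : ∀ i j, i ≠ j → ∀ e, e ∈ ps i → e ∉ ps j)
    (ht : ∀ i, t ∉ (ps i).map Prod.fst) :
    #(inEdges (G.filter fun e => e.2 = t → ∃ i, e ∈ ps i) t) = n := by
  let last i := (ps i).getLast (hpath i).1
  have hmem i : last i ∈ ps i := List.getLast_mem _
  have hsnd i : (last i).2 = t := by
    simpa [List.getLast?_eq_some_getLast (hpath i).1] using (hpath i).2.2.2.2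
  have hinj : Function.Injective last := fun i j hij =>
    by_contra fun hne => hdisj i j hne _ (hmem i) (hij ▸ hmem j)
  suffices inEdges (G.filter fun e => e.2 = t → ∃ i, e ∈ ps i) t = univ.image last by
    rw [this, card_image_of_injective _ hinj, card_univ, Fintype.card_fin]
  ext e
  simp only [inEdges, mem_filter, mem_image, mem_univ, true_and]
  constructor
  · rintro ⟨⟨-, hps⟩, rfl⟩
    obtain ⟨i, hei⟩ := hps rfl
    exact ⟨i, (eq_getLast_of_snd_notMem (hpath i).2.2.1 hei (ht i)).symm⟩
  · rintro ⟨i, rfl⟩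
    exact ⟨⟨(hpath i).2.1 _ (hmem i), fun _ => ⟨i, hmem i⟩⟩, hsnd i⟩

end Preserver

theorem stmt_5_general {V : Type*} [Fintype V] [DecidableEq V]
    (G : Finset (V × V)) (s t : V) (lam k : ℕ)
    (ps : Fin (lam + k) → List (V × V))
    (hpath : ∀ i, IsPath G s t (ps i))
    (hdisj : ∀ i j, i ≠ j → ∀ e, e ∈ ps i → e ∉ ps j)
    (hsimple : ∀ i, ((ps i).map Prod.fst).Nodup ∧ t ∉ (ps i).map Prod.fst)
    (H : Finset (V × V)) (hH : H = G.filter fun e => e.2 = t → ∃ i, e ∈ ps i) :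
    IsFTBFP G H s lam k ∧ (inEdges H t).card = lam + k := by
  have hHG : H ⊆ G := hH ▸ filter_subset _ _
  have hGH : ∀ e ∈ G, e.2 ≠ t → e ∈ H := fun e he het =>
    hH ▸ mem_filter.2 ⟨he, fun h => absurd h het⟩
  have hEDP : EDP H s t (lam + k) := ⟨ps, fun i => ⟨(hpath i).1,
    fun e he => hH ▸ mem_filter.2 ⟨(hpath i).2.1 e he, fun _ => ⟨i, he⟩⟩, (hpath i).2.2⟩, hdisj⟩
  refine ⟨⟨hHG, fun F hF v => ?_⟩, hH ▸ card_inEdges_filter ps hpath hdisj fun i => (hsimple i).2⟩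
  have hmin := min_le_maxFlow_sdiff (v := v) hGH hEDP hF
  have hmono := maxFlow_mono (sdiff_subset_sdiff hHG (le_refl F)) s v
  constructor <;> intro h <;> omega

/-- if `maxflow(s,t,G) ≥ lam + k`, restricting the in-edges of `t` to the
`lam + k` in-edges used by a fixed family of `lam + k` edge-disjoint (simple) `s`-`t`
paths yields a `(lam,k)`-FT-BFP in which `t` has in-degree exactly `lam + k`. -/
theorem stmt_5 {V : Type*} [Fintype V] [DecidableEq V]
    (G : Finset (V × V)) (s t : V) (lam k : ℕ)
    (hflow : lam + k ≤ maxFlow G s t)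
    (ps : Fin (lam + k) → List (V × V))
    (hpath : ∀ i, IsPath G s t (ps i))
    (hdisj : ∀ i j, i ≠ j → ∀ e, e ∈ ps i → e ∉ ps j)
    (hsimple : ∀ i, ((ps i).map Prod.fst).Nodup ∧ t ∉ (ps i).map Prod.fst)
    (H : Finset (V × V)) (hH : H = G.filter fun e => e.2 = t → ∃ i, e ∈ ps i) :
    IsFTBFP G H s lam k ∧ (inEdges H t).card = lam + k :=
  stmt_5_general G s t lam k ps hpath hdisj hsimple H hH
end

section
/- For every λ, k, n ≥ 1 with n ≥ 3λ·2^k, there exists a directed graph G on O(n) vertices with a source s such that every (λ,k)-FT-BFP of G contains at least 2^k·λ·n/3 edges. Concretely, G consists of λ vertex-disjoint complete binary trees of height k with roots r_1,…,r_λ, a source s with an edge to each r_i, and a set Y of at least n/3 additional vertices such that every leaf of every tree has an edge to every vertex of Y; then every (λ,k)-FT-BFP of G must contain all edges from leaves to Y. -/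
open Finset

/-! Fix a leaf `L` of tree `i` and a target `y`, and let the `k` faults be the edges that leave the
root-to-`L` path sideways. One route `s → root → ⋯ → leaf → y` per tree, always through the leaf
with the same index as `L`, avoids all faults, while `s` has only `lam` out-edges; so the flow from
`s` to `y` stays exactly `lam`. A preserver `H` therefore keeps `lam` edge-disjoint `s`-`y` paths
avoiding the faults, one through each root. The one through the root of tree `i` cannot leave the
root-to-`L` path, so it enters `y` by the edge `(L, y)`, which must lie in `H`. -/

section Paths

variable {V : Type*} {G : Finset (V × V)} {s t : V} {e : V × V} {p q : List (V × V)}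

lemma IsPath.mono_s6 {G' : Finset (V × V)} (hp : IsPath G s t p) (hG : G ⊆ G') : IsPath G' s t p :=
  ⟨hp.1, fun e he => hG (hp.2.1 e he), hp.2.2⟩

lemma IsPath.head_mem (hp : IsPath G s t p) :
    p.head hp.1 ∈ G ∧ (p.head hp.1).1 = s := by
  obtain ⟨hne, hG, -, hhead, -⟩ := hp
  rw [List.head?_eq_some_head hne] at hhead
  exact ⟨hG _ (List.head_mem hne), by simpa using hhead⟩

lemma IsPath.exists_snd_eq (hp : IsPath G s t p) : ∃ e ∈ p, e.2 = t := by
  obtain ⟨hne, -, -, -, hlast⟩ := hp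
  rw [List.getLast?_eq_some_getLast hne] at hlast
  exact ⟨_, List.getLast_mem hne, by simpa using hlast⟩

lemma IsPath.tail (hp : IsPath G s t (e :: q)) (hq : q ≠ []) : IsPath G e.2 t q := by
  obtain ⟨-, hG, hchain, -, hlast⟩ := hp
  obtain ⟨f, q, rfl⟩ := List.exists_cons_of_ne_nil hq
  obtain ⟨hef, hchain⟩ := List.isChain_cons_cons.mp hchain
  exact ⟨hq, fun g hg => hG g (List.mem_cons_of_mem _ hg), hchain, by simp [hef],
    by rwa [List.getLast?_cons_cons] at hlast⟩

lemma IsPath.tail_ne_nil (hp : IsPath G s t (e :: q)) (he : e.2 ≠ t) : q ≠ [] := by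
  rintro rfl
  exact he (by simpa using hp.2.2.2.2)

lemma IsPath.forall_fst_mem (P : V → Prop) (hp : IsPath G s t p) (hs : P s)
    (hP : ∀ e ∈ G, P e.1 → P e.2 ∨ ∀ f ∈ G, f.1 ≠ e.2) : ∀ e ∈ p, P e.1 := by
  induction p generalizing s with
  | nil => simp
  | cons e q ih =>
    have he1 : e.1 = s := by simpa using hp.2.2.2.1
    intro e' he'
    rcases List.mem_cons.mp he' with rfl | he'
    · exact he1 ▸ hs
    obtain ⟨f, q', rfl⟩ := List.exists_cons_of_ne_nil (List.ne_nil_of_mem he')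
    have hef : e.2 = f.1 := (List.isChain_cons_cons.mp hp.2.2.1).1
    have hfG : f ∈ G := hp.2.1 f (by simp)
    have he2 : P e.2 := (hP e (hp.2.1 e (by simp)) (he1 ▸ hs)).resolve_right
      fun h => h f hfG hef.symm
    exact ih (hp.tail (List.cons_ne_nil _ _)) he2 e' he'

def walkOf (v : ℕ → V) (m : ℕ) : List (V × V) :=
  (List.range m).map fun j => (v j, v (j + 1))

lemma mem_walkOf {v : ℕ → V} {m : ℕ} : e ∈ walkOf v m ↔ ∃ j < m, (v j, v (j + 1)) = e := by
  simp [walkOf]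

lemma isPath_walkOf {v : ℕ → V} {m : ℕ} (hm : 0 < m) (hG : ∀ j < m, (v j, v (j + 1)) ∈ G) :
    IsPath G (v 0) (v m) (walkOf v m) := by
  obtain ⟨m, rfl⟩ := Nat.exists_eq_succ_of_ne_zero hm.ne'
  refine ⟨by simp [walkOf], fun e he => ?_, ?_, by simp [walkOf, List.range_succ_eq_map],
    by simp [walkOf, List.range_succ]⟩
  · obtain ⟨j, hj, rfl⟩ := mem_walkOf.mp he
    exact hG j hj
  · show List.IsChain _ _
    rw [walkOf, List.isChain_map]
    exact (List.isChain_range_succ _ _).mpr fun _ _ => rfl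

end Paths

section Flows

variable {V : Type*} {G : Finset (V × V)} {s t : V} {r : ℕ}

lemma injective_head_of_edgeDisjoint {ps : Fin r → List (V × V)}
    (hps : ∀ i, IsPath G s t (ps i)) (hdisj : ∀ i j, i ≠ j → ∀ e, e ∈ ps i → e ∉ ps j) :
    Function.Injective fun i => (ps i).head (hps i).1 := by
  intro i j hij
  by_contra hne
  have hij : (ps i).head (hps i).1 = (ps j).head (hps j).1 := hij
  exact hdisj i j hne _ (List.head_mem _) (hij.symm ▸ List.head_mem _)

lemma exists_head?_eq_of_card_le {ps : Fin r → List (V × V)}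
    (hps : ∀ i, IsPath G s t (ps i)) (hdisj : ∀ i j, i ≠ j → ∀ e, e ∈ ps i → e ∉ ps j)
    {S : Finset (V × V)} (hS : ∀ e ∈ G, e.1 = s → e ∈ S) (hcard : S.card ≤ r) :
    ∀ e ∈ S, ∃ i, (ps i).head? = some e := by
  let f : Fin r → S := fun i => ⟨_, hS _ (hps i).head_mem.1 (hps i).head_mem.2⟩
  have hf : Function.Injective f := fun i j hij =>
    injective_head_of_edgeDisjoint hps hdisj (congrArg Subtype.val hij)
  have hbij := (Fintype.bijective_iff_injective_and_card f).mpr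
    ⟨hf, le_antisymm (by simpa using Fintype.card_le_of_injective f hf) (by simpa using hcard)⟩
  intro e he
  obtain ⟨i, hi⟩ := hbij.2 ⟨e, he⟩
  exact ⟨i, by rw [List.head?_eq_some_head (hps i).1]; exact congrArg (some ∘ Subtype.val) hi⟩

lemma EDP.le_card_s6 {S : Finset (V × V)} (h : EDP G s t r) (hS : ∀ e ∈ G, e.1 = s → e ∈ S) :
    r ≤ S.card := by
  obtain ⟨ps, hps, hdisj⟩ := h
  let f : Fin r → S := fun i => ⟨_, hS _ (hps i).head_mem.1 (hps i).head_mem.2⟩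
  simpa using Fintype.card_le_of_injective f fun i j hij =>
    injective_head_of_edgeDisjoint hps hdisj (congrArg Subtype.val hij)

lemma edp_zero_s6 : EDP G s t 0 :=
  ⟨Fin.elim0, fun i => i.elim0, fun i => i.elim0⟩

lemma bddAbove_edp_s6 : BddAbove {r | EDP G s t r} := by
  classical
  exact ⟨_, fun _ hr => EDP.le_card_s6 (S := G.filter fun e => e.1 = s) hr
    fun e he h => mem_filter.mpr ⟨he, h⟩⟩

lemma le_maxFlow (h : EDP G s t r) : r ≤ maxFlow G s t :=
  le_csSup bddAbove_edp_s6 h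

lemma maxFlow_le_card {S : Finset (V × V)} (hS : ∀ e ∈ G, e.1 = s → e ∈ S) :
    maxFlow G s t ≤ S.card :=
  csSup_le ⟨0, edp_zero_s6⟩ fun _ hr => EDP.le_card_s6 hr hS

lemma edp_maxFlow_s6 : EDP G s t (maxFlow G s t) :=
  Nat.sSup_mem ⟨0, edp_zero_s6⟩ bddAbove_edp_s6

end Flows

namespace ForestGraph

section Construction

variable (lam k n : ℕ)

/-- The source, `lam` binary trees of height `k` in heap numbering (the root is `1`, the children
of `v` are `2v` and `2v + 1`, the leaves are `2^k, …, 2^(k+1) - 1`; label `0` is unused), and the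
`n` target vertices. -/
abbrev Vertex : Type := Unit ⊕ (Fin lam × Fin (2 ^ (k + 1))) ⊕ Fin n

variable {lam k n}

def src : Vertex lam k n := .inl ()

/-- Labels are read modulo `2^(k+1)`, so that `node i v` needs no bound on `v`. -/
def node (i : Fin lam) (v : ℕ) : Vertex lam k n :=
  .inr (.inl (i, ⟨v % 2 ^ (k + 1), Nat.mod_lt _ (by positivity)⟩))

def tgt (y : Fin n) : Vertex lam k n := .inr (.inr y)

def Adj : Vertex lam k n → Vertex lam k n → Prop
  | .inl _, .inr (.inl (_, w)) => w.val = 1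
  | .inr (.inl (i, v)), .inr (.inl (i', w)) =>
      i = i' ∧ 1 ≤ v.val ∧ v.val < 2 ^ k ∧ w.val / 2 = v.val
  | .inr (.inl (_, v)), .inr (.inr _) => 2 ^ k ≤ v.val
  | _, _ => False

variable (lam k n) in
open Classical in
noncomputable def edges : Finset (Vertex lam k n × Vertex lam k n) :=
  univ.filter fun e => Adj e.1 e.2

lemma mem_edges {e : Vertex lam k n × Vertex lam k n} : e ∈ edges lam k n ↔ Adj e.1 e.2 := by
  simp [edges]

lemma card_vertex : Fintype.card (Vertex lam k n) = 1 + (lam * 2 ^ (k + 1) + n) := by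
  simp

lemma node_eq_of_lt {i : Fin lam} {v : ℕ} (hv : v < 2 ^ (k + 1)) :
    (node i v : Vertex lam k n) = .inr (.inl (i, ⟨v, hv⟩)) := by
  simp [node, Nat.mod_eq_of_lt hv]

lemma node_injective {i i' : Fin lam} {v v' : ℕ} (hv : v < 2 ^ (k + 1)) (hv' : v' < 2 ^ (k + 1))
    (h : (node i v : Vertex lam k n) = node i' v') : i = i' ∧ v = v' := by
  simpa [node_eq_of_lt hv, node_eq_of_lt hv'] using h

lemma eq_of_node_eq_node {i i' : Fin lam} {v v' : ℕ}
    (h : (node i v : Vertex lam k n) = node i' v') : i = i' := by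
  simp only [node, Sum.inr.injEq, Sum.inl.injEq, Prod.mk.injEq] at h
  exact h.1

lemma node_ne_src {i : Fin lam} {v : ℕ} : (node i v : Vertex lam k n) ≠ src := by
  simp [node, src]

lemma node_ne_tgt {i : Fin lam} {v : ℕ} {y : Fin n} : (node i v : Vertex lam k n) ≠ tgt y := by
  simp [node, tgt]

lemma adj_src_node {i : Fin lam} : Adj (src : Vertex lam k n) (node i 1) := by
  simp [Adj, src, node, Nat.mod_eq_of_lt (Nat.one_lt_two_pow (Nat.succ_ne_zero k))]

lemma adj_node_node {i i' : Fin lam} {v w : ℕ} (hv : v < 2 ^ (k + 1)) (hw : w < 2 ^ (k + 1)) :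
    Adj (node i v : Vertex lam k n) (node i' w) ↔ i = i' ∧ 1 ≤ v ∧ v < 2 ^ k ∧ w / 2 = v := by
  simp [node_eq_of_lt hv, node_eq_of_lt hw, Adj]

lemma adj_node_tgt {i : Fin lam} {v : ℕ} {y : Fin n} (hv : v < 2 ^ (k + 1)) :
    Adj (node i v : Vertex lam k n) (tgt y) ↔ 2 ^ k ≤ v := by
  simp [node_eq_of_lt hv, tgt, Adj]

lemma not_adj_tgt {y : Fin n} {b : Vertex lam k n} : ¬ Adj (tgt y) b := by
  rcases b with _ | _ | _ <;> simp [tgt, Adj]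

variable (lam k n) in
def rootEdges : Finset (Vertex lam k n × Vertex lam k n) :=
  univ.image fun i : Fin lam => (src, node i 1)

lemma card_rootEdges_le : (rootEdges lam k n).card ≤ lam :=
  card_image_le.trans_eq (by simp)

lemma mem_rootEdges_of_mem_edges {e : Vertex lam k n × Vertex lam k n} (he : e ∈ edges lam k n)
    (hsrc : e.1 = src) : e ∈ rootEdges lam k n := by
  obtain ⟨_, b⟩ := e
  subst hsrc
  have h := mem_edges.mp he
  rcases b with _ | ⟨i, w⟩ | _
  · simp [src, Adj] at h
  · have hw : w = ⟨1, Nat.one_lt_two_pow (Nat.succ_ne_zero k)⟩ := Fin.ext h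
    subst hw
    simp [rootEdges, ← node_eq_of_lt]
  · simp [src, Adj] at h

end Construction

section Ancestors

/-- The depth-`j` ancestor of the `l`-th leaf `2^k + l` of a heap-numbered tree of height `k`. -/
def ancestor (k l j : ℕ) : ℕ := (2 ^ k + l) / 2 ^ (k - j)

def sibling (w : ℕ) : ℕ := 2 * (w / 2) + (1 - w % 2)

variable {k l j : ℕ}

lemma sibling_ne (w : ℕ) : sibling w ≠ w := by
  unfold sibling; omega

lemma sibling_lt {w : ℕ} (hw : w < 2 ^ (k + 1)) : sibling w < 2 ^ (k + 1) := by
  unfold sibling; rw [pow_succ] at *; omega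

lemma two_pow_le_ancestor (hj : j ≤ k) : 2 ^ j ≤ ancestor k l j := by
  rw [ancestor, Nat.le_div_iff_mul_le (by positivity), ← pow_add, Nat.add_sub_cancel' hj]
  omega

lemma ancestor_lt_two_pow (hl : l < 2 ^ k) (hj : j ≤ k) : ancestor k l j < 2 ^ (j + 1) := by
  rw [ancestor, Nat.div_lt_iff_lt_mul (by positivity), ← pow_add, Nat.add_right_comm,
    Nat.add_sub_cancel' hj, pow_succ]
  omega

lemma ancestor_lt (hl : l < 2 ^ k) (hj : j ≤ k) : ancestor k l j < 2 ^ (k + 1) :=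
  (ancestor_lt_two_pow hl hj).trans_le (Nat.pow_le_pow_right two_pos (by omega))

lemma ancestor_zero (hl : l < 2 ^ k) : ancestor k l 0 = 1 := by
  have := two_pow_le_ancestor (l := l) (Nat.zero_le k)
  have := ancestor_lt_two_pow hl (Nat.zero_le k)
  omega

lemma ancestor_self : ancestor k l k = 2 ^ k + l := by
  simp [ancestor]

lemma ancestor_succ_div_two (hj : j < k) : ancestor k l (j + 1) / 2 = ancestor k l j := by
  rw [ancestor, ancestor, Nat.div_div_eq_div_mul, ← pow_succ, Nat.sub_add_eq, Nat.sub_add_cancel]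
  omega

lemma ancestor_inj {j' : ℕ} (hl : l < 2 ^ k) (hj : j ≤ k) (hj' : j' ≤ k)
    (h : ancestor k l j = ancestor k l j') : j = j' := by
  rw [← Nat.log_eq_of_pow_le_of_lt_pow (two_pow_le_ancestor hj) (ancestor_lt_two_pow hl hj), h,
    Nat.log_eq_of_pow_le_of_lt_pow (two_pow_le_ancestor hj') (ancestor_lt_two_pow hl hj')]

end Ancestors

section Routes

variable {lam k n l : ℕ}

/-- The `k` edges leaving the root-to-leaf path of leaf `l` in tree `i`. -/
def faults (i : Fin lam) (l : ℕ) : Finset (Vertex lam k n × Vertex lam k n) :=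
  (range k).image fun j => (node i (ancestor k l j), node i (sibling (ancestor k l (j + 1))))

lemma card_faults_le {i : Fin lam} :
    (faults i l : Finset (Vertex lam k n × Vertex lam k n)).card ≤ k :=
  card_image_le.trans_eq (card_range k)

/-- The vertices of the path `src → root → ⋯ → leaf 2^k + l → tgt y` through tree `i`. -/
def route (i : Fin lam) (l : ℕ) (y : Fin n) : ℕ → Vertex lam k n
  | 0 => src
  | j + 1 => if j ≤ k then node i (ancestor k l j) else tgt y

lemma route_edge_mem_edges (hl : l < 2 ^ k) (i : Fin lam) (y : Fin n) {j : ℕ} (hj : j < k + 2) :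
    (route i l y j, route i l y (j + 1)) ∈ edges lam k n := by
  rw [mem_edges]
  rcases j with _ | j
  · simpa [route, ancestor_zero hl] using adj_src_node
  rcases Nat.lt_or_ge j k with hjk | hjk
  · simp only [route, hjk.le, Nat.succ_le_of_lt hjk, if_true]
    rw [adj_node_node (ancestor_lt hl hjk.le) (ancestor_lt hl hjk)]
    exact ⟨rfl, Nat.one_le_two_pow.trans (two_pow_le_ancestor hjk.le),
      (ancestor_lt_two_pow hl hjk.le).trans_le (Nat.pow_le_pow_right two_pos hjk),
      ancestor_succ_div_two hjk⟩
  · obtain rfl : k = j := by omega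
    simp only [route, le_refl, if_true, Nat.not_succ_le_self, if_false]
    rw [adj_node_tgt (ancestor_lt hl le_rfl)]
    exact two_pow_le_ancestor le_rfl

/-- A fault edge leaves an ancestor of the leaf towards a child that is not an ancestor. -/
lemma route_edge_not_mem_faults (hl : l < 2 ^ k) (i i' : Fin lam) (y : Fin n) {j : ℕ}
    (hj : j < k + 2) : (route i' l y j, route i' l y (j + 1)) ∉
      (faults i l : Finset (Vertex lam k n × Vertex lam k n)) := by
  intro h
  obtain ⟨j₀, hj₀, heq⟩ := mem_image.mp h
  rw [mem_range] at hj₀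
  rcases j with _ | j
  · exact node_ne_src (congrArg Prod.fst heq)
  rcases Nat.lt_or_ge j k with hjk | hjk
  · simp only [route, hjk.le, Nat.succ_le_of_lt hjk, if_true, Prod.mk.injEq] at heq
    obtain rfl := ancestor_inj hl hj₀.le hjk.le
      (node_injective (ancestor_lt hl hj₀.le) (ancestor_lt hl hjk.le) heq.1).2
    exact sibling_ne _
      (node_injective (sibling_lt (ancestor_lt hl hj₀)) (ancestor_lt hl hjk) heq.2).2
  · obtain rfl : k = j := by omega
    simp only [route, Nat.not_succ_le_self, if_false, Prod.mk.injEq] at heq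
    exact node_ne_tgt heq.2

lemma route_edge_cases (hl : l < 2 ^ k) {i : Fin lam} {y : Fin n}
    {e : Vertex lam k n × Vertex lam k n} (he : e ∈ walkOf (route i l y) (k + 2)) :
    e = (src, node i 1) ∨ ∃ v, e.1 = node i v := by
  obtain ⟨j, hj, rfl⟩ := mem_walkOf.mp he
  rcases j with _ | j
  · simp [route, ancestor_zero hl]
  · exact Or.inr ⟨_, if_pos (by omega : j ≤ k)⟩

lemma edp_sdiff_faults (hl : l < 2 ^ k) (i : Fin lam) (y : Fin n) :
    EDP (edges lam k n \ faults i l) src (tgt y) lam := by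
  refine ⟨fun i' => walkOf (route i' l y) (k + 2), fun i' => ?_, ?_⟩
  · have h := isPath_walkOf (G := edges lam k n \ faults i l) (v := route i' l y) (m := k + 2)
      (by omega) fun j hj => mem_sdiff.mpr
        ⟨route_edge_mem_edges hl i' y hj, route_edge_not_mem_faults hl i i' y hj⟩
    simpa [route] using h
  · intro a b hab e hea heb
    rcases route_edge_cases hl hea with rfl | ⟨v, hv⟩ <;>
      rcases route_edge_cases hl heb with h | ⟨w, hw⟩
    · exact hab (eq_of_node_eq_node (congrArg Prod.snd h))
    · exact node_ne_src hw.symm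
    · exact node_ne_src (hv.symm.trans (congrArg Prod.fst h))
    · exact hab (eq_of_node_eq_node (hv.symm.trans hw))

lemma maxFlow_sdiff_faults (hl : l < 2 ^ k) (i : Fin lam) (y : Fin n) :
    maxFlow (edges lam k n \ faults i l) src (tgt y) = lam :=
  le_antisymm
    ((maxFlow_le_card fun _ he => mem_rootEdges_of_mem_edges (mem_sdiff.mp he).1).trans
      card_rootEdges_le)
    (le_maxFlow (edp_sdiff_faults hl i y))

end Routes

section Preservers

variable {lam k n l : ℕ}

lemma snd_of_fst_eq_ancestor (hl : l < 2 ^ k) {i : Fin lam}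
    {e : Vertex lam k n × Vertex lam k n} (he : e ∈ edges lam k n \ faults i l) {j : ℕ}
    (hj : j ≤ k) (h1 : e.1 = node i (ancestor k l j)) :
    (∃ j' ≤ k, e.2 = node i (ancestor k l j')) ∨ ∃ y, e.2 = tgt y := by
  obtain ⟨he, hF⟩ := mem_sdiff.mp he
  obtain ⟨_, b⟩ := e
  subst h1
  have hadj := mem_edges.mp he
  rcases b with _ | ⟨g, w⟩ | y
  · simp [node, Adj] at hadj
  · rw [← node_eq_of_lt w.isLt] at hadj hF ⊢
    obtain ⟨rfl, -, hlt, hw⟩ := (adj_node_node (ancestor_lt hl hj) w.isLt).mp hadj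
    have hjk : j < k := by
      refine hj.lt_of_ne fun hjk => ?_
      rw [hjk, ancestor_self] at hlt
      omega
    have hdiv := ancestor_succ_div_two (l := l) hjk
    by_cases hw' : w.val = ancestor k l (j + 1)
    · exact Or.inl ⟨j + 1, hjk, by rw [hw']⟩
    · refine absurd (mem_image.mpr ⟨j, mem_range.mpr hjk, ?_⟩) hF
      simp only [Prod.mk.injEq, true_and]
      congr 1
      unfold sibling
      omega
  · exact Or.inr ⟨y, rfl⟩

lemma leafEdge_mem_of_isPath (hl : l < 2 ^ k) {i : Fin lam} {y : Fin n}
    {q : List (Vertex lam k n × Vertex lam k n)}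
    (hq : IsPath (edges lam k n \ faults i l) (node i 1) (tgt y) q) :
    (node i (2 ^ k + l), tgt y) ∈ q := by
  obtain ⟨e, he, he2⟩ := hq.exists_snd_eq
  obtain ⟨j, hj, he1⟩ := hq.forall_fst_mem (fun x => ∃ j ≤ k, x = node i (ancestor k l j))
    ⟨0, Nat.zero_le k, by rw [ancestor_zero hl]⟩
    (fun e he ⟨j, hj, h1⟩ => (snd_of_fst_eq_ancestor hl he hj h1).imp id fun ⟨y, hy⟩ f hf hf1 =>
      not_adj_tgt (hy ▸ hf1 ▸ mem_edges.mp (mem_sdiff.mp hf).1)) e he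
  have hadj : Adj (node i (ancestor k l j)) (tgt y) :=
    he1 ▸ he2 ▸ mem_edges.mp (mem_sdiff.mp (hq.2.1 e he)).1
  rw [adj_node_tgt (ancestor_lt hl hj)] at hadj
  have : k < j + 1 :=
    (Nat.pow_lt_pow_iff_right (by norm_num)).mp (hadj.trans_lt (ancestor_lt_two_pow hl hj))
  obtain rfl : k = j := by omega
  rwa [← ancestor_self, ← he1, ← he2]

lemma leafEdge_mem_of_isFTBFP {H : Finset (Vertex lam k n × Vertex lam k n)}
    (hH : IsFTBFP (edges lam k n) H src lam k) (i : Fin lam) (hl : l < 2 ^ k) (y : Fin n) :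
    (node i (2 ^ k + l), tgt y) ∈ H := by
  have hflow := maxFlow_sdiff_faults hl i y
  obtain ⟨ps, hps, hdisj⟩ : EDP (H \ faults i l) src (tgt y) lam := by
    have h := edp_maxFlow_s6 (G := H \ faults i l) (s := src) (t := tgt y)
    rwa [(hH.2 _ card_faults_le (tgt y)).1 hflow.le, hflow] at h
  obtain ⟨a, ha⟩ := exists_head?_eq_of_card_le hps hdisj
    (fun e he => mem_rootEdges_of_mem_edges (hH.1 (mem_sdiff.mp he).1)) card_rootEdges_le
    (src, node i 1) (mem_image_of_mem _ (mem_univ i))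
  obtain ⟨q, hq⟩ := List.head?_eq_some_iff.mp ha
  have hpath := hq ▸ hps a
  have hq_path := (hpath.tail (hpath.tail_ne_nil node_ne_tgt)).mono_s6
    (sdiff_subset_sdiff hH.1 le_rfl)
  have hmem := (hps a).2.1 _ (hq ▸ List.mem_cons_of_mem _ (leafEdge_mem_of_isPath hl hq_path))
  exact (mem_sdiff.mp hmem).1

lemma card_le_card_of_isFTBFP {H : Finset (Vertex lam k n × Vertex lam k n)}
    (hH : IsFTBFP (edges lam k n) H src lam k) : lam * 2 ^ k * n ≤ H.card := by
  have hleaf : ∀ u : Fin (2 ^ k), 2 ^ k + u.val < 2 ^ (k + 1) := fun u => by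
    have := u.isLt; rw [pow_succ]; omega
  have h := card_le_card_of_injOn (s := univ)
    (fun x : Fin lam × Fin (2 ^ k) × Fin n => ((node x.1 (2 ^ k + x.2.1), tgt x.2.2) :
      Vertex lam k n × Vertex lam k n))
    (fun x _ => leafEdge_mem_of_isFTBFP hH x.1 x.2.1.isLt x.2.2) fun x _ x' _ hxx' => by
      obtain ⟨h1, h2⟩ := Prod.mk.inj hxx'
      obtain ⟨hi, hu⟩ := node_injective (hleaf x.2.1) (hleaf x'.2.1) h1
      simp only [tgt, Sum.inr.injEq] at h2
      exact Prod.ext hi (Prod.ext (Fin.ext (by omega)) h2)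
  simpa [mul_assoc] using h

end Preservers

end ForestGraph

theorem stmt_6_general (lam k n : ℕ) (hlam : 1 ≤ lam)
    (hn : 3 * lam * 2 ^ k ≤ n) :
    ∃ (V : Type) (instF : Fintype V) (instD : DecidableEq V)
      (G : Finset (V × V)) (s : V),
      @Fintype.card V instF ≤ 3 * n ∧
      ∀ H : Finset (V × V), @IsFTBFP V instD G H s lam k →
        2 ^ k * lam * n ≤ 3 * H.card := by
  refine ⟨ForestGraph.Vertex lam k n, inferInstance, inferInstance, ForestGraph.edges lam k n,
    ForestGraph.src, ?_, fun H hH => ?_⟩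
  · have hpos : 1 ≤ lam * 2 ^ k := Nat.mul_le_mul hlam Nat.one_le_two_pow
    rw [ForestGraph.card_vertex, pow_succ, ← mul_assoc]
    rw [mul_assoc] at hn
    omega
  · have := ForestGraph.card_le_card_of_isFTBFP hH
    rw [mul_comm (2 ^ k)]
    omega

/-- for all `lam, k, n ≥ 1` with `n ≥ 3·lam·2^k` there is a digraph on
`O(n)` (here: at most `3n`) vertices with a source `s` such that every
`(lam,k)`-FT-BFP of it has at least `2^k·lam·n/3` edges. -/
theorem stmt_6 (lam k n : ℕ) (hlam : 1 ≤ lam) (hk : 1 ≤ k)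
    (hn : 3 * lam * 2 ^ k ≤ n) :
    ∃ (V : Type) (instF : Fintype V) (instD : DecidableEq V)
      (G : Finset (V × V)) (s : V),
      @Fintype.card V instF ≤ 3 * n ∧
      ∀ H : Finset (V × V), @IsFTBFP V instD G H s lam k →
        2 ^ k * lam * n ≤ 3 * H.card :=
  stmt_6_general lam k n hlam hn
end
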